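/- Let H_n be the class of Boolean functions h : {0,1}^{2^n−1} → {0,1} computable by a full binary decision tree of depth n in which the 2^n − 1 internal nodes query 2^n − 1 pairwise distinct variables and which depends on all 2^n − 1 variables. Then for every Boolean function f with decision tree complexity D(f) ≤ n, there exists h ∈ H_n such that EC(f) ≤ EC(h). -/

import Mathlib

/-- A gate in a Boolean circuit over the standard basis `{∨₂, ∧₂, ¬}`:
input gates labelled by variables, constant gates, and `∧`/`∨`/`¬` gates
whose arguments are (indices of) earlier gates. -/
inductive Gate (n : ℕ) : Type where
  | input : Fin n → Gate n
  | const : Bool → Gate n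
  | and : ℕ → ℕ → Gate n
  | or : ℕ → ℕ → Gate n
  | not : ℕ → Gate n
deriving DecidableEq

/-- The indices of the incoming gates of a gate. -/
def Gate.deps {n : ℕ} : Gate n → List ℕ
  | .and a b => [a, b]
  | .or a b => [a, b]
  | .not a => [a]
  | _ => []

/-- Inner gates are the non-input (and non-constant) gates, i.e. `∧`, `∨`, `¬` gates. -/
def Gate.isInner {n : ℕ} : Gate n → Bool
  | .and _ _ => true
  | .or _ _ => true
  | .not _ => true
  | _ => false

/-- A Boolean circuit over the standard basis on `n` input variables: a sequence of
gates (topologically sorted, so each gate only takes earlier gates as inputs,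
which makes the underlying graph acyclic) together with a designated output gate. -/
structure Circuit (n : ℕ) : Type where
  size : ℕ
  gates : Fin size → Gate n
  out : Fin size
  wf : ∀ i : Fin size, ∀ j ∈ (gates i).deps, j < (i : ℕ)

/-- The Boolean value of gate `i` of circuit `C` under input `x`. -/
def Circuit.evalGate {n : ℕ} (C : Circuit n) (x : Fin n → Bool) (i : ℕ) (h : i < C.size) :
    Bool :=
  match hg : C.gates ⟨i, h⟩ with
  | .input j => x j
  | .const b => b
  | .not a =>
      have ha : a < i := C.wf ⟨i, h⟩ a (by rw [hg]; simp [Gate.deps])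
      ! C.evalGate x a (ha.trans h)
  | .and a b =>
      have ha : a < i := C.wf ⟨i, h⟩ a (by rw [hg]; simp [Gate.deps])
      have hb : b < i := C.wf ⟨i, h⟩ b (by rw [hg]; simp [Gate.deps])
      C.evalGate x a (ha.trans h) && C.evalGate x b (hb.trans h)
  | .or a b =>
      have ha : a < i := C.wf ⟨i, h⟩ a (by rw [hg]; simp [Gate.deps])
      have hb : b < i := C.wf ⟨i, h⟩ b (by rw [hg]; simp [Gate.deps])
      C.evalGate x a (ha.trans h) || C.evalGate x b (hb.trans h)
termination_by i

/-- The output of circuit `C` on input `x`. -/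
def Circuit.output {n : ℕ} (C : Circuit n) (x : Fin n → Bool) : Bool :=
  C.evalGate x C.out C.out.isLt

/-- `C` computes the Boolean function `f`. -/
def Circuit.Computes {n : ℕ} (C : Circuit n) (f : (Fin n → Bool) → Bool) : Prop :=
  ∀ x, C.output x = f x

/-- The number of activated inner gates of `C` under input `x`. -/
def Circuit.energyAt {n : ℕ} (C : Circuit n) (x : Fin n → Bool) : ℕ :=
  (Finset.univ.filter fun i : Fin C.size =>
    (C.gates i).isInner = true ∧ C.evalGate x i i.isLt = true).card

/-- The energy complexity `EC(C)` of a circuit `C`: the maximum number of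
activated inner gates over all inputs. -/
def Circuit.energy {n : ℕ} (C : Circuit n) : ℕ :=
  Finset.univ.sup fun x : Fin n → Bool => C.energyAt x

/-- The energy complexity `EC(f)` of a Boolean function `f`: the minimum of `EC(C)`
over all circuits `C` computing `f`. -/
noncomputable def EC {n : ℕ} (f : (Fin n → Bool) → Bool) : ℕ :=
  sInf {k | ∃ C : Circuit n, C.Computes f ∧ C.energy = k}

/-- A deterministic decision tree on `n` Boolean variables: internal nodes query a
variable (left child on `0`, right child on `1`) and leaves are labelled `0`/`1`. -/
inductive DTree (n : ℕ) : Type where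
  | leaf : Bool → DTree n
  | node : Fin n → DTree n → DTree n → DTree n

/-- Evaluation of a decision tree on an input. -/
def DTree.eval {n : ℕ} : DTree n → (Fin n → Bool) → Bool
  | .leaf b, _ => b
  | .node i t0 t1, x => if x i then t1.eval x else t0.eval x

/-- The depth of a decision tree (number of queries on a worst-case input). -/
def DTree.depth {n : ℕ} : DTree n → ℕ
  | .leaf _ => 0
  | .node _ t0 t1 => max t0.depth t1.depth + 1

/-- The decision tree complexity `D(f)`: the minimum depth of a decision tree
computing `f`. -/
noncomputable def Dcomp {n : ℕ} (f : (Fin n → Bool) → Bool) : ℕ :=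
  sInf {k | ∃ T : DTree n, (∀ x, T.eval x = f x) ∧ T.depth = k}

/-- `T` is a full (perfect) binary decision tree of depth `d`. -/
inductive DTree.Perfect {m : ℕ} : ℕ → DTree m → Prop where
  | leaf (b : Bool) : DTree.Perfect 0 (.leaf b)
  | node {d : ℕ} (i : Fin m) {t0 t1 : DTree m} :
      DTree.Perfect d t0 → DTree.Perfect d t1 → DTree.Perfect (d + 1) (.node i t0 t1)

/-- The list of variables queried at the internal nodes of a decision tree. -/
def DTree.queries {m : ℕ} : DTree m → List (Fin m)
  | .leaf _ => []
  | .node i t0 t1 => i :: (t0.queries ++ t1.queries)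

/-- Membership in the class `H_n`: Boolean functions `h : {0,1}^{2^n − 1} → {0,1}`
computable by a full binary decision tree of depth `n` whose `2^n − 1` internal nodes
query pairwise distinct variables, and which depend on all `2^n − 1` variables. -/
def MemH (n : ℕ) (h : (Fin (2 ^ n - 1) → Bool) → Bool) : Prop :=
  (∃ T : DTree (2 ^ n - 1), T.Perfect n ∧ T.queries.Nodup ∧ ∀ x, T.eval x = h x) ∧
  ∀ i : Fin (2 ^ n - 1), ∃ x : Fin (2 ^ n - 1) → Bool,
    h (Function.update x i (!x i)) ≠ h x

/-!
Take an optimal decision tree for `f` and prune it, so that below every internal node there are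
leaves of both labels. Pad it to a perfect tree of depth `n` that queries a fresh variable at each
node (numbered in preorder), a leaf `b` above depth `n` becoming a node with children `b` and
`!b`. In the resulting `h ∈ H_n` the two subtrees of every node attain complementary values, so
`h` depends on every variable; and `f` is obtained from `h` by substituting for each variable of
`h` the variable of `f` queried at the corresponding node, or the constant `0` at padding nodes.
Such a substitution turns a circuit for `h` into one for `f` in which the same inner gates fire,
hence `EC f ≤ EC h`.
-/

namespace Gate

variable {n : ℕ}

def eval (x : Fin n → Bool) (v : ℕ → Bool) : Gate n → Bool
  | .input j => x j
  | .const b => b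
  | .and a b => v a && v b
  | .or a b => v a || v b
  | .not a => !v a

theorem eval_congr {x : Fin n → Bool} {v w : ℕ → Bool} {g : Gate n}
    (h : ∀ a ∈ g.deps, v a = w a) : g.eval x v = g.eval x w := by
  cases g <;> simp_all [eval, deps]

def shift (s : ℕ) : Gate n → Gate n
  | .and a b => .and (s + a) (s + b)
  | .or a b => .or (s + a) (s + b)
  | .not a => .not (s + a)
  | g => g

theorem deps_shift (s : ℕ) (g : Gate n) : (g.shift s).deps = g.deps.map (s + ·) := by
  cases g <;> rfl

theorem eval_shift (s : ℕ) (x : Fin n → Bool) (v : ℕ → Bool) (g : Gate n) :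
    (g.shift s).eval x v = g.eval x (fun a => v (s + a)) := by
  cases g <;> rfl

def subst {m : ℕ} (σ : Fin n → Option (Fin m)) : Gate n → Gate m
  | .input j => (σ j).elim (.const false) .input
  | .const b => .const b
  | .and a b => .and a b
  | .or a b => .or a b
  | .not a => .not a

variable {m : ℕ} (σ : Fin n → Option (Fin m))

theorem deps_subst (g : Gate n) : (g.subst σ).deps = g.deps := by
  cases g with
  | input j => cases h : σ j <;> simp [subst, deps, h]
  | _ => rfl

theorem isInner_subst (g : Gate n) : (g.subst σ).isInner = g.isInner := by
  cases g with
  | input j => cases h : σ j <;> simp [subst, isInner, h]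
  | _ => rfl

end Gate

def substInput {n m : ℕ} (σ : Fin n → Option (Fin m)) (x : Fin m → Bool) (j : Fin n) :
    Bool :=
  (σ j).elim false x

theorem Gate.eval_subst {n m : ℕ} (σ : Fin n → Option (Fin m)) (x : Fin m → Bool)
    (v : ℕ → Bool) (g : Gate n) : (g.subst σ).eval x v = g.eval (substInput σ x) v := by
  cases g with
  | input j => cases h : σ j <;> simp [Gate.subst, Gate.eval, substInput, h]
  | _ => rfl

namespace Circuit

variable {n : ℕ}

def value (C : Circuit n) (x : Fin n → Bool) (i : ℕ) : Bool :=
  if h : i < C.size then C.evalGate x i h else false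

theorem value_of_lt (C : Circuit n) (x : Fin n → Bool) {i : ℕ} (h : i < C.size) :
    C.value x i = C.evalGate x i h :=
  dif_pos h

theorem value_of_le (C : Circuit n) (x : Fin n → Bool) {i : ℕ} (h : C.size ≤ i) :
    C.value x i = false :=
  dif_neg h.not_gt

theorem output_eq_value (C : Circuit n) (x : Fin n → Bool) :
    C.output x = C.value x C.out :=
  (C.value_of_lt x C.out.isLt).symm

theorem evalGate_eq_eval (C : Circuit n) (x : Fin n → Bool) (i : ℕ) (h : i < C.size) :
    C.evalGate x i h = (C.gates ⟨i, h⟩).eval x (C.value x) := by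
  have hdep : ∀ a ∈ (C.gates ⟨i, h⟩).deps, a < C.size := fun a ha => (C.wf _ a ha).trans h
  rw [Circuit.evalGate]
  split <;> next hg => simp_all [Gate.eval, Gate.deps, value]

theorem value_eq_of_lt (C : Circuit n) (x : Fin n → Bool) {i : ℕ} (h : i < C.size) :
    C.value x i = (C.gates ⟨i, h⟩).eval x (C.value x) := by
  rw [value_of_lt C x h, evalGate_eq_eval]

theorem value_eq_of_consistent (C : Circuit n) (x : Fin n → Bool) {v : ℕ → Bool}
    (hv : ∀ i (h : i < C.size), v i = (C.gates ⟨i, h⟩).eval x v)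
    (hv' : ∀ i, C.size ≤ i → v i = false) : C.value x = v := by
  funext i
  induction i using Nat.strong_induction_on with
  | _ i ih =>
    by_cases h : i < C.size
    · rw [value_eq_of_lt C x h, hv i h]
      exact Gate.eval_congr fun a ha => ih a (C.wf _ a ha)
    · rw [hv' i (not_lt.mp h), value_of_le C x (not_lt.mp h)]

def single (g : Gate n) (hg : g.deps = []) : Circuit n where
  size := 1
  gates _ := g
  out := 0
  wf _ := by simp [hg]

theorem output_single (g : Gate n) (hg : g.deps = []) (x : Fin n → Bool) :
    (single g hg).output x = g.eval x (fun _ => false) := by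
  rw [output_eq_value, value_eq_of_lt _ _ (Fin.isLt _)]
  exact Gate.eval_congr (by simp [single, hg])

def append (C D : Circuit n) : Circuit n where
  size := C.size + D.size
  gates i :=
    if h : (i : ℕ) < C.size then C.gates ⟨i, h⟩
    else (D.gates ⟨i - C.size, by omega⟩).shift C.size
  out := ⟨C.size + D.out, by omega⟩
  wf i a ha := by
    by_cases h : (i : ℕ) < C.size
    · simp only [h, dite_true] at ha
      exact C.wf _ a ha
    · simp only [h, dite_false, Gate.deps_shift, List.mem_map] at ha
      obtain ⟨b, hb, rfl⟩ := ha
      have := D.wf _ b hb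
      simp only at this
      omega

theorem value_append (C D : Circuit n) (x : Fin n → Bool) :
    (C.append D).value x =
      fun i => if i < C.size then C.value x i else D.value x (i - C.size) := by
  refine value_eq_of_consistent _ x (fun i h => ?_) (fun i h => ?_)
  · by_cases hi : i < C.size
    · simp only [append, hi, dite_true, if_true]
      rw [value_eq_of_lt C x hi]
      refine Gate.eval_congr fun a ha => ?_
      rw [if_pos ((C.wf _ a ha).trans hi)]
    · simp only [append, hi, dite_false, if_false, Gate.eval_shift]
      rw [value_eq_of_lt D x (by simp only [append] at h; omega)]
      congr 1
      funext a
      simp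
  · simp only [append] at h
    simp [show ¬ i < C.size by omega, D.value_of_le x (show D.size ≤ i - C.size by omega)]

def snoc (C : Circuit n) (g : Gate n) (hg : ∀ a ∈ g.deps, a < C.size) : Circuit n where
  size := C.size + 1
  gates i := if h : (i : ℕ) < C.size then C.gates ⟨i, h⟩ else g
  out := ⟨C.size, by omega⟩
  wf i a ha := by
    by_cases h : (i : ℕ) < C.size
    · simp only [h, dite_true] at ha
      exact C.wf _ a ha
    · simp only [h, dite_false] at ha
      have := hg a ha
      omega

theorem value_snoc (C : Circuit n) (g : Gate n) (hg : ∀ a ∈ g.deps, a < C.size)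
    (x : Fin n → Bool) : (C.snoc g hg).value x = fun i =>
      if i < C.size then C.value x i else if i = C.size then g.eval x (C.value x) else false := by
  refine value_eq_of_consistent _ x (fun i h => ?_) (fun i h => ?_)
  · by_cases hi : i < C.size
    · simp only [snoc, hi, dite_true, if_true]
      rw [value_eq_of_lt C x hi]
      refine Gate.eval_congr fun a ha => ?_
      rw [if_pos ((C.wf _ a ha).trans hi)]
    · simp only [snoc] at h
      simp only [snoc, show i = C.size by omega, lt_irrefl, dite_false, if_false]
      exact Gate.eval_congr fun a ha => by rw [if_pos (hg a ha)]
  · simp only [snoc] at h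
    simp [show ¬ i < C.size by omega, show i ≠ C.size by omega]

theorem output_snoc (C : Circuit n) (g : Gate n) (hg : ∀ a ∈ g.deps, a < C.size)
    (x : Fin n → Bool) : (C.snoc g hg).output x = g.eval x (C.value x) := by
  rw [output_eq_value, value_snoc]
  simp [snoc]

def not (C : Circuit n) : Circuit n :=
  C.snoc (.not C.out) (by simp [Gate.deps])

def and (C D : Circuit n) : Circuit n :=
  (C.append D).snoc (.and C.out (C.size + D.out)) (by simp [Gate.deps, append]; omega)

def or (C D : Circuit n) : Circuit n :=
  (C.append D).snoc (.or C.out (C.size + D.out)) (by simp [Gate.deps, append]; omega)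

def var (j : Fin n) : Circuit n :=
  single (.input j) rfl

def const (b : Bool) : Circuit n :=
  single (.const b) rfl

variable (x : Fin n → Bool)

@[simp]
theorem output_not (C : Circuit n) : C.not.output x = !C.output x := by
  refine (output_snoc _ _ _ x).trans ?_
  simp [Gate.eval, output_eq_value]

@[simp]
theorem output_and (C D : Circuit n) : (C.and D).output x = (C.output x && D.output x) := by
  refine (output_snoc _ _ _ x).trans ?_
  simp [Gate.eval, output_eq_value, value_append]

@[simp]
theorem output_or (C D : Circuit n) : (C.or D).output x = (C.output x || D.output x) := by
  refine (output_snoc _ _ _ x).trans ?_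
  simp [Gate.eval, output_eq_value, value_append]

@[simp]
theorem output_var (j : Fin n) : (var j).output x = x j :=
  output_single _ _ x

@[simp]
theorem output_const (b : Bool) : (const b : Circuit n).output x = b :=
  output_single _ _ x

end Circuit

def DTree.toCircuit {m : ℕ} : DTree m → Circuit m
  | .leaf b => .const b
  | .node i t0 t1 => ((Circuit.var i).and t1.toCircuit).or ((Circuit.var i).not.and t0.toCircuit)

theorem DTree.toCircuit_computes {m : ℕ} (t : DTree m) : t.toCircuit.Computes t.eval := by
  intro x
  induction t with
  | leaf b => simp [toCircuit, eval]
  | node i t0 t1 ih0 ih1 => cases h : x i <;> simp [toCircuit, eval, h, ih0, ih1]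

namespace Circuit

variable {n : ℕ}

def subst {m : ℕ} (C : Circuit n) (σ : Fin n → Option (Fin m)) : Circuit m where
  size := C.size
  gates i := (C.gates i).subst σ
  out := C.out
  wf i j hj := C.wf i j (by rwa [Gate.deps_subst] at hj)

variable {m : ℕ} (C : Circuit n) (σ : Fin n → Option (Fin m))

theorem value_subst (x : Fin m → Bool) : (C.subst σ).value x = C.value (substInput σ x) :=
  (C.subst σ).value_eq_of_consistent x
    (fun i h => by
      rw [value_eq_of_lt C _ h]
      exact (Gate.eval_subst σ x _ _).symm)
    (fun i h => C.value_of_le _ h)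

theorem output_subst (x : Fin m → Bool) : (C.subst σ).output x = C.output (substInput σ x) := by
  rw [output_eq_value, output_eq_value, value_subst]
  rfl

theorem energyAt_subst (x : Fin m → Bool) :
    (C.subst σ).energyAt x = C.energyAt (substInput σ x) := by
  unfold energyAt
  congr 1
  refine Finset.filter_congr fun i _ => ?_
  rw [← value_of_lt, ← value_of_lt, value_subst]
  exact and_congr_left' (by rw [← Gate.isInner_subst σ]; rfl)

theorem energy_subst_le : (C.subst σ).energy ≤ C.energy :=
  Finset.sup_le fun x _ => (C.energyAt_subst σ x).trans_le (Finset.le_sup (Finset.mem_univ _))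

end Circuit

theorem EC_le_of_eq_comp_substInput {n m : ℕ} {f : (Fin m → Bool) → Bool}
    {h : (Fin n → Bool) → Bool} (hh : ∃ C : Circuit n, C.Computes h)
    (σ : Fin n → Option (Fin m)) (hf : ∀ x, f x = h (substInput σ x)) : EC f ≤ EC h := by
  obtain ⟨C, hC, hCE⟩ :=
    Nat.sInf_mem (s := {k | ∃ C : Circuit n, C.Computes h ∧ C.energy = k})
      (let ⟨C, hC⟩ := hh; ⟨_, C, hC, rfl⟩)
  calc EC f ≤ (C.subst σ).energy :=
        Nat.sInf_le ⟨C.subst σ, fun x => by rw [C.output_subst, hC, hf], rfl⟩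
    _ ≤ C.energy := C.energy_subst_le σ
    _ = EC h := hCE

namespace DTree

variable {m : ℕ}

theorem eval_congr (t : DTree m) {x y : Fin m → Bool} (h : ∀ i ∈ t.queries, x i = y i) :
    t.eval x = t.eval y := by
  induction t with
  | leaf b => rfl
  | node i t0 t1 ih0 ih1 =>
    simp only [queries, List.mem_cons, List.mem_append] at h
    simp only [eval, h i (.inl rfl), ih0 fun j hj => h j (.inr (.inl hj)),
      ih1 fun j hj => h j (.inr (.inr hj))]

theorem eval_update_of_not_mem (t : DTree m) {j : Fin m} (hj : j ∉ t.queries)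
    (x : Fin m → Bool) (b : Bool) : t.eval (Function.update x j b) = t.eval x :=
  t.eval_congr fun _ hk => Function.update_of_ne (by rintro rfl; exact hj hk) _ _

def ofFun : List (Fin m) → ((Fin m → Bool) → Bool) → DTree m
  | [], g => .leaf (g fun _ => false)
  | i :: l, g => .node i (ofFun l fun x => g (Function.update x i false))
      (ofFun l fun x => g (Function.update x i true))

theorem eval_ofFun (l : List (Fin m)) (g : (Fin m → Bool) → Bool) (x : Fin m → Bool) :
    (ofFun l g).eval x = g fun j => if j ∈ l then x j else false := by
  induction l generalizing g with
  | nil => simp [ofFun, eval]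
  | cons i l ih =>
    have hx : (fun j => if j ∈ i :: l then x j else false) =
        Function.update (fun j => if j ∈ l then x j else false) i (x i) := by
      funext j
      by_cases hj : j = i
      · simp [hj]
      · simp [hj]
    rw [hx]
    cases hi : x i <;> simp [ofFun, eval, ih, hi]

theorem exists_eval_eq (f : (Fin m → Bool) → Bool) : ∃ T : DTree m, ∀ x, T.eval x = f x :=
  ⟨ofFun (List.finRange m) f, fun x => by simp [eval_ofFun]⟩

end DTree

theorem exists_dtree_depth_le_of_Dcomp_le {m n : ℕ} {f : (Fin m → Bool) → Bool}
    (hD : Dcomp f ≤ n) : ∃ T : DTree m, (∀ x, T.eval x = f x) ∧ T.depth ≤ n := by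
  obtain ⟨T, hT⟩ := DTree.exists_eval_eq f
  obtain ⟨T, hTf, hTd⟩ :=
    Nat.sInf_mem (s := {k | ∃ T : DTree m, (∀ x, T.eval x = f x) ∧ T.depth = k})
      ⟨_, T, hT, rfl⟩
  exact ⟨T, hTf, hTd ▸ hD⟩

namespace DTree

variable {m : ℕ}

def leaves : DTree m → List Bool
  | .leaf b => [b]
  | .node _ t0 t1 => t0.leaves ++ t1.leaves

theorem leaves_ne_nil (t : DTree m) : t.leaves ≠ [] := by
  induction t with
  | leaf b => simp [leaves]
  | node i t0 t1 ih0 _ => simp [leaves, ih0]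

def Reduced : DTree m → Prop
  | .leaf _ => True
  | .node _ t0 t1 => t0.Reduced ∧ t1.Reduced ∧ ∀ b, b ∈ t0.leaves ∨ b ∈ t1.leaves

def mkNode (i : Fin m) : DTree m → DTree m → DTree m
  | .leaf b0, .leaf b1 => if b0 = b1 then .leaf b0 else .node i (.leaf b0) (.leaf b1)
  | t0, t1 => .node i t0 t1

def prune : DTree m → DTree m
  | .leaf b => .leaf b
  | .node i t0 t1 => mkNode i t0.prune t1.prune

theorem eval_mkNode (i : Fin m) (t0 t1 : DTree m) (x : Fin m → Bool) :
    (mkNode i t0 t1).eval x = (node i t0 t1).eval x := by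
  rcases t0 with b0 | _ <;> rcases t1 with b1 | _ <;> try rfl
  by_cases h : b0 = b1
  · simp [mkNode, eval, h]
  · simp [mkNode, h]

theorem depth_mkNode_le (i : Fin m) (t0 t1 : DTree m) :
    (mkNode i t0 t1).depth ≤ (node i t0 t1).depth := by
  rcases t0 with b0 | _ <;> rcases t1 with b1 | _ <;> try exact le_rfl
  by_cases h : b0 = b1
  · simp [mkNode, depth, h]
  · simp [mkNode, h]

theorem Reduced.mem_leaves_node {i : Fin m} {t0 t1 : DTree m} (h : (node i t0 t1).Reduced)
    (b : Bool) : b ∈ (node i t0 t1).leaves :=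
  List.mem_append.mpr (h.2.2 b)

theorem Reduced.mkNode (i : Fin m) {t0 t1 : DTree m} (h0 : t0.Reduced) (h1 : t1.Reduced) :
    (mkNode i t0 t1).Reduced := by
  rcases t0 with b0 | _ <;> rcases t1 with b1 | _
  · by_cases h : b0 = b1
    · simp [DTree.mkNode, h, Reduced]
    · cases b0 <;> cases b1 <;> simp_all [DTree.mkNode, Reduced, leaves]
  · exact ⟨h0, h1, fun b => .inr (h1.mem_leaves_node b)⟩
  · exact ⟨h0, h1, fun b => .inl (h0.mem_leaves_node b)⟩
  · exact ⟨h0, h1, fun b => .inl (h0.mem_leaves_node b)⟩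

theorem eval_prune (t : DTree m) (x : Fin m → Bool) : t.prune.eval x = t.eval x := by
  induction t with
  | leaf b => rfl
  | node i t0 t1 ih0 ih1 => simp only [prune, eval_mkNode, eval, ih0, ih1]

theorem depth_prune_le (t : DTree m) : t.prune.depth ≤ t.depth := by
  induction t with
  | leaf b => exact le_rfl
  | node i t0 t1 ih0 ih1 =>
    refine (depth_mkNode_le i _ _).trans ?_
    simp only [depth]
    omega

theorem reduced_prune (t : DTree m) : t.prune.Reduced := by
  induction t with
  | leaf b => trivial
  | node i t0 t1 ih0 ih1 => exact .mkNode i ih0 ih1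

end DTree

def DependsOnVar {N : ℕ} (g : (Fin N → Bool) → Bool) (j : Fin N) : Prop :=
  ∃ x, g (Function.update x j (!x j)) ≠ g x

theorem Bool.exists_complementary_mem {s t : Set Bool} (hs : s.Nonempty) (ht : t.Nonempty)
    (hst : ∀ b, b ∈ s ∨ b ∈ t) : ∃ a ∈ s, (!a) ∈ t := by
  obtain ⟨a, ha⟩ := hs
  obtain ⟨b, hb⟩ := ht
  rcases hst (!b) with h | h
  · exact ⟨!b, h, by rwa [Bool.not_not]⟩
  · cases a <;> cases b <;> simp_all

namespace DTree

variable {m : ℕ}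

theorem mem_queries_of_dependsOnVar {t : DTree m} {j : Fin m} (h : DependsOnVar t.eval j) :
    j ∈ t.queries := by
  by_contra hj
  obtain ⟨x, hx⟩ := h
  exact hx (t.eval_update_of_not_mem hj x _)

theorem eval_node_update_false {i : Fin m} {L : DTree m} (R : DTree m) (hi : i ∉ L.queries)
    (x : Fin m → Bool) : (node i L R).eval (Function.update x i false) = L.eval x := by
  simp [eval, L.eval_update_of_not_mem hi]

theorem eval_node_update_true {i : Fin m} (L : DTree m) {R : DTree m} (hi : i ∉ R.queries)
    (x : Fin m → Bool) : (node i L R).eval (Function.update x i true) = R.eval x := by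
  simp [eval, R.eval_update_of_not_mem hi]

theorem mem_range_eval_node_left {i : Fin m} {L : DTree m} (R : DTree m) (hi : i ∉ L.queries)
    {b : Bool} (hb : b ∈ Set.range L.eval) : b ∈ Set.range (node i L R).eval := by
  obtain ⟨x, rfl⟩ := hb
  exact ⟨_, eval_node_update_false R hi x⟩

theorem mem_range_eval_node_right {i : Fin m} (L : DTree m) {R : DTree m} (hi : i ∉ R.queries)
    {b : Bool} (hb : b ∈ Set.range R.eval) : b ∈ Set.range (node i L R).eval := by
  obtain ⟨x, rfl⟩ := hb
  exact ⟨_, eval_node_update_true L hi x⟩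

theorem dependsOnVar_node_left {i j : Fin m} {L : DTree m} (R : DTree m) (hi : i ∉ L.queries)
    (h : DependsOnVar L.eval j) : DependsOnVar (node i L R).eval j := by
  have hji : j ≠ i := by rintro rfl; exact hi (mem_queries_of_dependsOnVar h)
  obtain ⟨x, hx⟩ := h
  refine ⟨Function.update x i false, ?_⟩
  rwa [Function.update_of_ne hji, Function.update_comm hji.symm, eval_node_update_false R hi,
    eval_node_update_false R hi]

theorem dependsOnVar_node_right {i j : Fin m} (L : DTree m) {R : DTree m} (hi : i ∉ R.queries)
    (h : DependsOnVar R.eval j) : DependsOnVar (node i L R).eval j := by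
  have hji : j ≠ i := by rintro rfl; exact hi (mem_queries_of_dependsOnVar h)
  obtain ⟨x, hx⟩ := h
  refine ⟨Function.update x i true, ?_⟩
  rwa [Function.update_of_ne hji, Function.update_comm hji.symm, eval_node_update_true L hi,
    eval_node_update_true L hi]

theorem dependsOnVar_node_root {i : Fin m} {L R : DTree m} (hL : i ∉ L.queries)
    (hR : i ∉ R.queries) (hLR : ∀ k ∈ L.queries, k ∉ R.queries) {a : Bool}
    (ha : a ∈ Set.range L.eval) (ha' : (!a) ∈ Set.range R.eval) :
    DependsOnVar (node i L R).eval i := by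
  obtain ⟨xL, hxL⟩ := ha
  obtain ⟨xR, hxR⟩ := ha'
  -- `L` and `R` query disjoint variables, so the two witnesses can be glued
  let y : Fin m → Bool := fun k => if k ∈ L.queries then xL k else xR k
  have hyL : L.eval y = a := hxL ▸ L.eval_congr fun k hk => if_pos hk
  have hyR : R.eval y = !a := hxR ▸ R.eval_congr fun k hk => if_neg fun hkL => hLR k hkL hk
  refine ⟨Function.update y i false, ?_⟩
  rw [Function.update_self, Function.update_idem, Bool.not_false,
    eval_node_update_true L hR, eval_node_update_false R hL, hyL, hyR]
  cases a <;> decide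

def Separating : DTree m → Prop
  | .leaf _ => True
  | .node _ L R =>
    L.Separating ∧ R.Separating ∧ ∃ a ∈ Set.range L.eval, (!a) ∈ Set.range R.eval

theorem dependsOnVar_of_separating {t : DTree m} (hnd : t.queries.Nodup) (ht : t.Separating) :
    ∀ j ∈ t.queries, DependsOnVar t.eval j := by
  induction t with
  | leaf b => simp [queries]
  | node i L R ihL ihR =>
    obtain ⟨hi, hLR⟩ := List.nodup_cons.mp hnd
    obtain ⟨hL, hR, hdisj⟩ := List.nodup_append.mp hLR
    obtain ⟨hsL, hsR, a, ha, ha'⟩ := ht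
    simp only [queries, List.mem_cons, List.mem_append] at hi ⊢
    rintro j (rfl | hj | hj)
    · exact dependsOnVar_node_root (fun h => hi (.inl h)) (fun h => hi (.inr h))
        (fun k hk hk' => hdisj k hk k hk' rfl) ha ha'
    · exact dependsOnVar_node_left R (fun h => hi (.inl h)) (ihL hL hsL j hj)
    · exact dependsOnVar_node_right L (fun h => hi (.inr h)) (ihR hR hsR j hj)

theorem length_queries_of_perfect {d : ℕ} {t : DTree m} (h : t.Perfect d) :
    t.queries.length = 2 ^ d - 1 := by
  induction h with
  | leaf b => rfl
  | @node d i _ _ _ _ ih0 ih1 =>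
    simp only [queries, List.length_cons, List.length_append, ih0, ih1, pow_succ]
    have := Nat.one_le_two_pow (n := d)
    omega

theorem mem_queries_of_perfect {n : ℕ} {t : DTree (2 ^ n - 1)} (hp : t.Perfect n)
    (hnd : t.queries.Nodup) (j : Fin (2 ^ n - 1)) : j ∈ t.queries := by
  have : t.queries.toFinset = Finset.univ := Finset.eq_univ_of_card _ <| by
    rw [List.toFinset_card_of_nodup hnd, length_queries_of_perfect hp, Fintype.card_fin]
  rw [← List.mem_toFinset, this]
  exact Finset.mem_univ j

/-- A leaf `b` counts as a node with children `b` and `!b`: padding a leaf this way keeps the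
padded nodes essential. -/
def left : DTree m → DTree m
  | .leaf b => .leaf b
  | .node _ t0 _ => t0

def right : DTree m → DTree m
  | .leaf b => .leaf (!b)
  | .node _ _ t1 => t1

def root? : DTree m → Option (Fin m)
  | .leaf _ => none
  | .node i _ _ => some i

theorem depth_left_le {t : DTree m} {d : ℕ} (h : t.depth ≤ d + 1) : t.left.depth ≤ d := by
  cases t <;> simp_all [left, depth]

theorem depth_right_le {t : DTree m} {d : ℕ} (h : t.depth ≤ d + 1) : t.right.depth ≤ d := by
  cases t <;> simp_all [right, depth]

theorem Reduced.left {t : DTree m} (h : t.Reduced) : t.left.Reduced := by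
  cases t
  exacts [trivial, h.1]

theorem Reduced.right {t : DTree m} (h : t.Reduced) : t.right.Reduced := by
  cases t
  exacts [trivial, h.2.1]

theorem Reduced.mem_leaves_left_or_right {t : DTree m} (h : t.Reduced) (b : Bool) :
    b ∈ t.left.leaves ∨ b ∈ t.right.leaves := by
  cases t with
  | leaf c => cases b <;> cases c <;> simp [DTree.left, DTree.right, leaves]
  | node i t0 t1 => exact h.2.2 b

theorem mem_leaves_left_or_right {t : DTree m} {b : Bool} (h : b ∈ t.leaves) :
    b ∈ t.left.leaves ∨ b ∈ t.right.leaves := by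
  cases t with
  | leaf c => exact .inl h
  | node i t0 t1 => exact List.mem_append.mp h

/-- Pads `t` to a perfect tree of depth `d` whose nodes query the distinct variables
`v, v + 1, …, v + 2 ^ d - 2` in preorder. At depth `0` only leaves remain, so `t.eval` there
just reads off the label. -/
def pad (N : ℕ) : ℕ → ℕ → DTree m → DTree N
  | 0, _, t => .leaf (t.eval fun _ => false)
  | d + 1, v, t =>
    if h : v < N then .node ⟨v, h⟩ (pad N d (v + 1) t.left) (pad N d (v + 2 ^ d) t.right)
    else .leaf false

/-- The variable of `t` that the node of `pad N d v t` at preorder position `j` stands for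
(`none` at padding nodes). -/
def padLabel : ℕ → DTree m → ℕ → Option (Fin m)
  | 0, _, _ => none
  | d + 1, t, j =>
    if j = 0 then t.root?
    else if j < 2 ^ d then padLabel d t.left (j - 1) else padLabel d t.right (j - 2 ^ d)

variable {N : ℕ}

theorem pad_succ {d v : ℕ} (t : DTree m) (h : v < N) :
    pad N (d + 1) v t = .node ⟨v, h⟩ (pad N d (v + 1) t.left) (pad N d (v + 2 ^ d) t.right) :=
  dif_pos h

theorem pad_bounds {d v : ℕ} (hv : v + 2 ^ (d + 1) ≤ N + 1) :
    v < N ∧ v + 1 + 2 ^ d ≤ N + 1 ∧ v + 2 ^ d + 2 ^ d ≤ N + 1 := by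
  have := Nat.one_le_two_pow (n := d)
  rw [pow_succ] at hv
  omega

theorem perfect_pad {d v : ℕ} (t : DTree m) (hv : v + 2 ^ d ≤ N + 1) :
    (pad N d v t).Perfect d := by
  induction d generalizing v t with
  | zero => exact .leaf _
  | succ d ih =>
    obtain ⟨hvN, hl, hr⟩ := pad_bounds hv
    rw [pad_succ t hvN]
    exact .node _ (ih _ hl) (ih _ hr)

theorem bounds_of_mem_queries_pad {d v : ℕ} {t : DTree m} {j : Fin N}
    (hj : j ∈ (pad N d v t).queries) : v ≤ j ∧ (j : ℕ) + 1 < v + 2 ^ d := by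
  induction d generalizing v t with
  | zero => simp [pad, queries] at hj
  | succ d ih =>
    by_cases hvN : v < N
    · rw [pad_succ t hvN] at hj
      simp only [queries, List.mem_cons, List.mem_append] at hj
      have := Nat.one_le_two_pow (n := d)
      rw [pow_succ]
      rcases hj with rfl | hj | hj
      · simp only [le_refl, true_and]
        omega
      · have := ih hj
        omega
      · have := ih hj
        omega
    · simp [pad, hvN, queries] at hj

theorem nodup_queries_pad (d v : ℕ) (t : DTree m) : (pad N d v t).queries.Nodup := by
  induction d generalizing v t with
  | zero => simp [pad, queries]
  | succ d ih =>
    by_cases hvN : v < N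
    · rw [pad_succ t hvN]
      refine List.nodup_cons.mpr ⟨?_, List.nodup_append.mpr ⟨ih _ _, ih _ _, ?_⟩⟩
      · rw [List.mem_append]
        rintro (h | h) <;> have := bounds_of_mem_queries_pad h <;> simp at this
      · intro j hj k hk hjk
        have := bounds_of_mem_queries_pad hj
        have := bounds_of_mem_queries_pad hk
        rw [hjk] at *
        omega
    · simp [pad, hvN, queries]

theorem eval_pad {d v : ℕ} {t : DTree m} (hv : v + 2 ^ d ≤ N + 1) (hd : t.depth ≤ d)
    {x : Fin m → Bool} {y : Fin N → Bool}
    (hy : ∀ j : Fin N, v ≤ j → (j : ℕ) + 1 < v + 2 ^ d →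
      y j = (padLabel d t (j - v)).elim false x) :
    (pad N d v t).eval y = t.eval x := by
  induction d generalizing v t with
  | zero =>
    cases t with
    | leaf b => rfl
    | node => simp [depth] at hd
  | succ d ih =>
    obtain ⟨hvN, hl, hr⟩ := pad_bounds hv
    have := Nat.one_le_two_pow (n := d)
    have hroot : y ⟨v, hvN⟩ = t.root?.elim false x := by
      rw [hy _ le_rfl (by simp only [pow_succ]; omega)]
      simp [padLabel]
    have hL : (pad N d (v + 1) t.left).eval y = t.left.eval x := by
      refine ih hl (depth_left_le hd) fun j hj hj' => ?_
      rw [hy j (by omega) (by rw [pow_succ]; omega), padLabel, if_neg (by omega),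
        if_pos (by omega)]
      congr 2
    have hR : (pad N d (v + 2 ^ d) t.right).eval y = t.right.eval x := by
      refine ih hr (depth_right_le hd) fun j hj hj' => ?_
      rw [hy j (by omega) (by rw [pow_succ]; omega), padLabel, if_neg (by omega),
        if_neg (by omega)]
      congr 2
      omega
    rw [pad_succ t hvN, eval, hroot, hL, hR]
    cases t <;> rfl

theorem mem_range_eval_pad {d v : ℕ} {t : DTree m} (hv : v + 2 ^ d ≤ N + 1) (hd : t.depth ≤ d)
    {b : Bool} (hb : b ∈ t.leaves) : b ∈ Set.range (pad N d v t).eval := by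
  induction d generalizing v t with
  | zero =>
    cases t with
    | leaf c => exact ⟨fun _ => false, by simpa [pad, eval, leaves, eq_comm] using hb⟩
    | node => simp [depth] at hd
  | succ d ih =>
    obtain ⟨hvN, hl, hr⟩ := pad_bounds hv
    rw [pad_succ t hvN]
    rcases mem_leaves_left_or_right hb with hb | hb
    · refine mem_range_eval_node_left _ (fun h => ?_) (ih hl (depth_left_le hd) hb)
      have := bounds_of_mem_queries_pad h
      simp at this
    · refine mem_range_eval_node_right _ (fun h => ?_) (ih hr (depth_right_le hd) hb)
      have := bounds_of_mem_queries_pad h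
      simp at this

theorem separating_pad {d v : ℕ} {t : DTree m} (hv : v + 2 ^ d ≤ N + 1) (hd : t.depth ≤ d)
    (ht : t.Reduced) : (pad N d v t).Separating := by
  induction d generalizing v t with
  | zero => trivial
  | succ d ih =>
    obtain ⟨hvN, hl, hr⟩ := pad_bounds hv
    rw [pad_succ t hvN]
    refine ⟨ih hl (depth_left_le hd) ht.left, ih hr (depth_right_le hd) ht.right, ?_⟩
    have range_ne {s : DTree m} {w : ℕ} (hw : w + 2 ^ d ≤ N + 1) (hs : s.depth ≤ d) :
        (Set.range (pad N d w s).eval).Nonempty := by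
      obtain ⟨c, hc⟩ := List.exists_mem_of_ne_nil _ s.leaves_ne_nil
      exact ⟨c, mem_range_eval_pad hw hs hc⟩
    refine Bool.exists_complementary_mem (range_ne hl (depth_left_le hd))
      (range_ne hr (depth_right_le hd)) fun b => ?_
    exact (ht.mem_leaves_left_or_right b).imp (mem_range_eval_pad hl (depth_left_le hd))
      (mem_range_eval_pad hr (depth_right_le hd))

end DTree

open DTree in
/-- For every Boolean function `f` with decision tree complexity
`D(f) ≤ n`, there exists `h ∈ H_n` with `EC(f) ≤ EC(h)`. -/
theorem stmt18 (n m : ℕ) (f : (Fin m → Bool) → Bool) (hD : Dcomp f ≤ n) :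
    ∃ h : (Fin (2 ^ n - 1) → Bool) → Bool, MemH n h ∧ EC f ≤ EC h := by
  obtain ⟨T, hTf, hTn⟩ := exists_dtree_depth_le_of_Dcomp_le hD
  have hd : T.prune.depth ≤ n := (depth_prune_le T).trans hTn
  have hv : 0 + 2 ^ n ≤ 2 ^ n - 1 + 1 := by
    have := Nat.one_le_two_pow (n := n)
    omega
  let U := pad (2 ^ n - 1) n 0 T.prune
  have hU : U.Perfect n := perfect_pad _ hv
  have hnd : U.queries.Nodup := nodup_queries_pad _ _ _
  refine ⟨U.eval, ⟨⟨U, hU, hnd, fun _ => rfl⟩, fun j => ?_⟩, ?_⟩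
  · exact dependsOnVar_of_separating hnd (separating_pad hv hd T.reduced_prune) j
      (mem_queries_of_perfect hU hnd j)
  · refine EC_le_of_eq_comp_substInput ⟨U.toCircuit, U.toCircuit_computes⟩
      (fun j => padLabel n T.prune j) fun x => ?_
    rw [eval_pad (x := x) hv hd fun j _ _ => by simp [substInput], eval_prune, hTf]
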